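/- arXiv:1905.03210 — 3 statements merged into one kernel-verified Lean document; each statement's English description precedes it below -/
import Mathlib

section
/- Let G = ⟨S | R⟩ be a group presentation with all relators of even length. For a geodesic word w and a letter s ∈ S ∪ S⁻¹, the word ws is geodesic if and only if s⁻¹ ∉ R([w]), where R(g) denotes the set of letters t ∈ S ∪ S⁻¹ such that some geodesic word ending in t represents g. -/
section GeneralPresentation

variable {S : Type*}

/-- The element of the presented group represented by a letter `(s, e)`:
`s` if `e = true`, `s⁻¹` if `e = false`. -/
def evalLetter (rels : Set (FreeGroup S)) (t : S × Bool) : PresentedGroup rels :=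
  if t.2 then PresentedGroup.of t.1 else (PresentedGroup.of t.1)⁻¹

/-- The element of the presented group represented by a word in `S ∪ S⁻¹`. -/
def evalW (rels : Set (FreeGroup S)) (w : List (S × Bool)) : PresentedGroup rels :=
  (w.map (evalLetter rels)).prod

/-- The word length (distance to the identity in the word metric) of an element
of the presented group with respect to the generating set `S`. -/
noncomputable def wlen (rels : Set (FreeGroup S)) (g : PresentedGroup rels) : ℕ :=
  sInf {m | ∃ w : List (S × Bool), evalW rels w = g ∧ w.length = m}

/-- A word is geodesic if its length equals the word length of the element it represents. -/
def IsGeodesic (rels : Set (FreeGroup S)) (w : List (S × Bool)) : Prop :=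
  w.length = wlen rels (evalW rels w)

/-- `Rset rels g` is the set of letters `t ∈ S ∪ S⁻¹` such that some geodesic word
ending in `t` represents `g`. -/
def Rset (rels : Set (FreeGroup S)) (g : PresentedGroup rels) : Set (S × Bool) :=
  {t | ∃ v : List (S × Bool), IsGeodesic rels (v ++ [t]) ∧ evalW rels (v ++ [t]) = g}

/-- The inverse of a letter. -/
def invLetter (t : S × Bool) : S × Bool := (t.1, !t.2)

/-- All relators of the presentation have even length. -/
def EvenRels [DecidableEq S] (rels : Set (FreeGroup S)) : Prop :=
  ∀ r ∈ rels, Even (FreeGroup.toWord r).length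

end GeneralPresentation

/-!
Right multiplication by a letter changes word length by at most one, and since every relator
has even length, `g ↦ (-1) ^ (length of a word for g)` is a well-defined homomorphism to `ℤˣ`,
so it cannot leave the word length unchanged. Hence for a geodesic `w` the word `wt` is either
geodesic or `[wt]` is strictly shorter than `[w]`, and the latter happens exactly when a geodesic
word for `[w]` ends in `t⁻¹`.
-/

section WordMetric

variable {S : Type*} {rels : Set (FreeGroup S)}

@[simp]
lemma evalW_append (u v : List (S × Bool)) :
    evalW rels (u ++ v) = evalW rels u * evalW rels v := by
  simp [evalW]

@[simp]
lemma evalW_singleton (t : S × Bool) : evalW rels [t] = evalLetter rels t := by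
  simp [evalW]

@[simp]
lemma evalLetter_invLetter (t : S × Bool) :
    evalLetter rels (invLetter t) = (evalLetter rels t)⁻¹ := by
  obtain ⟨s, _ | _⟩ := t <;> simp [evalLetter, invLetter]

lemma evalW_eq_mk (L : List (S × Bool)) :
    evalW rels L = PresentedGroup.mk rels (FreeGroup.mk L) := by
  have hmk : PresentedGroup.mk rels = FreeGroup.lift (PresentedGroup.of (rels := rels)) :=
    FreeGroup.ext_hom _ _ fun _ ↦ by simp [PresentedGroup.of]
  rw [hmk, FreeGroup.lift_mk, evalW]
  congr 1
  refine List.map_congr_left fun ⟨s, b⟩ _ ↦ ?_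
  cases b <;> simp [evalLetter]

lemma evalW_surjective : Function.Surjective (evalW rels) := by
  intro g
  obtain ⟨x, rfl⟩ := PresentedGroup.mk_surjective rels g
  obtain ⟨L, rfl⟩ := Quot.exists_rep x
  exact ⟨L, evalW_eq_mk L⟩

lemma wlen_le_length (L : List (S × Bool)) : wlen rels (evalW rels L) ≤ L.length :=
  Nat.sInf_le ⟨L, rfl, rfl⟩

lemma exists_isGeodesic (g : PresentedGroup rels) :
    ∃ L, evalW rels L = g ∧ IsGeodesic rels L := by
  obtain ⟨L, hL, hlen⟩ : wlen rels g ∈ {m | ∃ L, evalW rels L = g ∧ L.length = m} :=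
    let ⟨L, hL⟩ := evalW_surjective g
    Nat.sInf_mem ⟨L.length, L, hL, rfl⟩
  exact ⟨L, hL, by rw [IsGeodesic, hL, hlen]⟩

lemma wlen_mul_evalLetter_le (g : PresentedGroup rels) (t : S × Bool) :
    wlen rels (g * evalLetter rels t) ≤ wlen rels g + 1 := by
  obtain ⟨L, rfl, hL⟩ := exists_isGeodesic g
  unfold IsGeodesic at hL
  simpa [← hL] using wlen_le_length (rels := rels) (L ++ [t])

lemma wlen_le_wlen_mul_evalLetter_add_one (g : PresentedGroup rels) (t : S × Bool) :
    wlen rels g ≤ wlen rels (g * evalLetter rels t) + 1 := by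
  simpa using wlen_mul_evalLetter_le (g * evalLetter rels t) (invLetter t)

lemma invLetter_mem_Rset_iff (g : PresentedGroup rels) (t : S × Bool) :
    invLetter t ∈ Rset rels g ↔ wlen rels (g * evalLetter rels t) + 1 = wlen rels g := by
  have hle := wlen_le_wlen_mul_evalLetter_add_one g t
  constructor
  · rintro ⟨v, hv, hvg⟩
    rw [IsGeodesic, hvg] at hv
    simp only [evalW_append, evalW_singleton, evalLetter_invLetter] at hvg
    have hvlen := wlen_le_length (rels := rels) v
    rw [eq_mul_of_mul_inv_eq hvg] at hvlen
    simp only [List.length_append, List.length_singleton] at hv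
    omega
  · intro h
    obtain ⟨v, hv, hv_geo⟩ := exists_isGeodesic (g * evalLetter rels t)
    have hvg : evalW rels (v ++ [invLetter t]) = g := by simp [hv]
    refine ⟨v, ?_, hvg⟩
    rw [IsGeodesic, hv] at hv_geo
    rw [IsGeodesic, hvg, List.length_append, hv_geo, List.length_singleton, h]

lemma IsGeodesic.append_singleton_iff {w : List (S × Bool)} (hw : IsGeodesic rels w)
    (t : S × Bool) : IsGeodesic rels (w ++ [t]) ↔
      wlen rels (evalW rels w * evalLetter rels t) = wlen rels (evalW rels w) + 1 := by
  unfold IsGeodesic at hw ⊢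
  rw [← hw, evalW_append, evalW_singleton, List.length_append, List.length_singleton, eq_comm]

lemma lift_neg_one_mk (L : List (S × Bool)) :
    FreeGroup.lift (fun _ : S ↦ (-1 : ℤˣ)) (FreeGroup.mk L) = (-1) ^ L.length := by
  have hletter : ∀ x : S × Bool, cond x.2 (-1 : ℤˣ) (-1)⁻¹ = -1 := fun ⟨_, b⟩ ↦ by
    cases b <;> simp
  rw [FreeGroup.lift_mk, List.map_congr_left fun x _ ↦ hletter x, List.map_const',
    List.prod_replicate]

section EvenRelators

variable [DecidableEq S]

def lengthSign (heven : EvenRels rels) : PresentedGroup rels →* ℤˣ :=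
  PresentedGroup.toGroup (f := fun _ ↦ -1) fun r hr ↦ by
    rw [← FreeGroup.mk_toWord (x := r), lift_neg_one_mk, (heven r hr).neg_one_pow]

lemma lengthSign_evalW (heven : EvenRels rels) (L : List (S × Bool)) :
    lengthSign heven (evalW rels L) = (-1) ^ L.length := by
  rw [evalW_eq_mk]
  exact lift_neg_one_mk L

lemma wlen_mul_evalLetter_ne (heven : EvenRels rels) (g : PresentedGroup rels) (t : S × Bool) :
    wlen rels (g * evalLetter rels t) ≠ wlen rels g := by
  intro h
  obtain ⟨L, rfl, hL⟩ := exists_isGeodesic g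
  obtain ⟨M, hM, hM_geo⟩ := exists_isGeodesic (evalW rels L * evalLetter rels t)
  have hlen : M.length = L.length := by
    unfold IsGeodesic at hL hM_geo
    rw [hM_geo, hM, h, hL]
  have hsign := congrArg (lengthSign heven) hM
  rw [← evalW_singleton, ← evalW_append, lengthSign_evalW, lengthSign_evalW, hlen,
    List.length_append, List.length_singleton, pow_succ, mul_neg_one] at hsign
  exact units_ne_neg_self _ hsign

end EvenRelators

end WordMetric

/-- for a geodesic word `w` and a letter `s`, the word `ws` is geodesic
if and only if `s⁻¹ ∉ R([w])`. -/
theorem geodesic_append_iff {S : Type*} [DecidableEq S] (rels : Set (FreeGroup S))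
    (heven : EvenRels rels) (w : List (S × Bool)) (t : S × Bool)
    (hw : IsGeodesic rels w) :
    IsGeodesic rels (w ++ [t]) ↔ invLetter t ∉ Rset rels (evalW rels w) := by
  rw [hw.append_singleton_iff, invLetter_mem_Rset_iff]
  have hup := wlen_mul_evalLetter_le (evalW rels w) t
  have hdown := wlen_le_wlen_mul_evalLetter_add_one (evalW rels w) t
  have hne := wlen_mul_evalLetter_ne heven (evalW rels w) t
  omega
end

section
/- If a braid diagram on n strings is k-regular winding (every subdiagram obtained by deleting n−k strings is minimal), then it is m-regular winding for all k ≤ m ≤ n. -/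
/-- Relators of the braid group on `k` strands, presented on the generator alphabet `ℕ`:
braid relations and far commutativity among the genuine generators `σ_0, …, σ_{k-2}`,
while the out-of-range generators `σ_i`, `i ≥ k - 1`, are made trivial.
The resulting group is isomorphic to the braid group `B_k`. -/
def braidRelsN (k : ℕ) : Set (FreeGroup ℕ) :=
  {r | (∃ i : ℕ, i + 3 ≤ k ∧
          r = .of i * .of (i+1) * .of i * (.of (i+1) * .of i * .of (i+1))⁻¹) ∨
       (∃ i j : ℕ, i + 2 ≤ j ∧ j + 2 ≤ k ∧
          r = .of i * .of j * (.of j * .of i)⁻¹) ∨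
       (∃ i : ℕ, k ≤ i + 1 ∧ r = .of i)}

/-- The braid group on `k` strands. -/
abbrev BGroup (k : ℕ) := PresentedGroup (braidRelsN k)

/-- The braid on `k` strands represented by a word; a letter `(i, b)` stands for the
crossing `σᵢ` (if `b = true`) or `σᵢ⁻¹` (if `b = false`). -/
def evalN (k : ℕ) (w : List (ℕ × Bool)) : BGroup k :=
  (w.map fun p => if p.2 then (PresentedGroup.of p.1 : BGroup k)
    else (PresentedGroup.of p.1)⁻¹).prod

/-- A word is a valid braid word (diagram) on `k` strands if all its letters are among
`σ_0^{±1}, …, σ_{k-2}^{±1}`. -/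
def WValid (k : ℕ) (w : List (ℕ × Bool)) : Prop := ∀ p ∈ w, p.1 + 2 ≤ k

/-- A braid diagram on `k` strands is minimal if it has the least number of crossings
among all diagrams of the same braid. -/
def MinDiag (k : ℕ) (D : List (ℕ × Bool)) : Prop :=
  WValid k D ∧ ∀ D' : List (ℕ × Bool), WValid k D' → evalN k D' = evalN k D →
    D.length ≤ D'.length

/-- Swap the entries at positions `i` and `i+1` of a list. -/
def swapAt' (cur : List ℕ) (i : ℕ) : List ℕ :=
  (cur.set i (cur.getD (i+1) 0)).set (i+1) (cur.getD i 0)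

/-- Delete all strands whose (original) label is not kept. `cur` is the list of original
strand labels at the current positions; a crossing is kept iff both of its strands are
kept, and its new position is the number of kept strands to its left. -/
def deleteAux (keep : ℕ → Bool) : List ℕ → List (ℕ × Bool) → List (ℕ × Bool)
  | _, [] => []
  | cur, (i, b) :: rest =>
      (if keep (cur.getD i 0) && keep (cur.getD (i+1) 0)
        then [(((cur.take i).countP keep), b)] else [])
      ++ deleteAux keep (swapAt' cur i) rest

/-- The subdiagram of a diagram `D` on `n` strands obtained by deleting all strands
outside `T`. It is a diagram on `T.card` strands. -/
def subDiag (n : ℕ) (T : Finset ℕ) (D : List (ℕ × Bool)) : List (ℕ × Bool) :=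
  deleteAux (fun x => decide (x ∈ T)) (List.range n) D

/-- A diagram on `n` strands is `k`-regular winding if after deleting any `n - k` of its
strands the resulting subdiagram on `k` strands is minimal. -/
def RegWinding (n k : ℕ) (D : List (ℕ × Bool)) : Prop :=
  ∀ T ⊆ Finset.range n, T.card = k → MinDiag k (subDiag n T D)


/-!
Deleting strands is compatible with braid equivalence. Deletion of the strands outside a set is
not a homomorphism on words by itself, since the fate of a crossing depends on the current
arrangement of the strands; recording the deleted word for every arrangement at once turns it
into a homomorphism from `B_m` to the wreath product of `B_k` with the permutations of the
arrangements. Hence the subdiagrams on a fixed set of strands of two diagrams of the same braid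
represent the same braid.

Let `E` be the subdiagram of a `k`-regular winding diagram on an `m`-set of strands. The
`k`-subdiagrams of `E` are `k`-subdiagrams of the original diagram, so they are minimal. Summing
the lengths of the `k`-subdiagrams counts every crossing `(m - 2).choose (k - 2)` times, so for a
diagram `E'` of the braid of `E` we get `c * |E| ≤ c * |E'|` with `c = (m - 2).choose (k - 2)`,
which is positive as `2 ≤ k ≤ m`.
-/

open Finset

lemma BGroup.of_braid {k i : ℕ} (h : i + 3 ≤ k) :
    (PresentedGroup.of i : BGroup k) * .of (i + 1) * .of i = .of (i + 1) * .of i * .of (i + 1) :=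
  PresentedGroup.mk_eq_mk_of_mul_inv_mem (Or.inl ⟨i, h, rfl⟩)

lemma BGroup.of_comm {k i j : ℕ} (hij : i + 2 ≤ j) (hj : j + 2 ≤ k) :
    (PresentedGroup.of i : BGroup k) * .of j = .of j * .of i :=
  PresentedGroup.mk_eq_mk_of_mul_inv_mem (Or.inr (Or.inl ⟨i, j, hij, hj, rfl⟩))

lemma evalN_cons (k i : ℕ) (s : Bool) (w : List (ℕ × Bool)) :
    evalN k ((i, s) :: w) =
      (if s then PresentedGroup.of i else (PresentedGroup.of i)⁻¹) * evalN k w := by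
  simp [evalN]

lemma evalN_append (k : ℕ) (u v : List (ℕ × Bool)) :
    evalN k (u ++ v) = evalN k u * evalN k v := by
  simp [evalN]

lemma List.exists_eq_append_cons_cons {α : Type*} {l : List α} {i : ℕ}
    (h : i + 2 ≤ l.length) :
    ∃ pre a b post, l = pre ++ a :: b :: post ∧ pre.length = i :=
  ⟨l.take i, l[i], l[i + 1], l.drop (i + 2), by simp, by simp; omega⟩

lemma List.exists_eq_append_cons_cons_cons {α : Type*} {l : List α} {i : ℕ}
    (h : i + 3 ≤ l.length) :
    ∃ pre a b c post, l = pre ++ a :: b :: c :: post ∧ pre.length = i :=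
  ⟨l.take i, l[i], l[i + 1], l[i + 2], l.drop (i + 3), by simp, by simp; omega⟩

@[simp] lemma swapAt'_cons_cons (a b : ℕ) (l : List ℕ) :
    swapAt' (a :: b :: l) 0 = b :: a :: l :=
  rfl

@[simp] lemma swapAt'_cons_succ (a i : ℕ) (l : List ℕ) :
    swapAt' (a :: l) (i + 1) = a :: swapAt' l i := by
  simp [swapAt']

@[simp] lemma swapAt'_append_add (pre l : List ℕ) (i : ℕ) :
    swapAt' (pre ++ l) (pre.length + i) = pre ++ swapAt' l i := by
  induction pre with
  | nil => simp
  | cons c t ih => simpa [Nat.add_right_comm] using ih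

@[simp] lemma swapAt'_append (pre post : List ℕ) (a b : ℕ) :
    swapAt' (pre ++ a :: b :: post) pre.length = pre ++ b :: a :: post := by
  simpa using swapAt'_append_add pre (a :: b :: post) 0

lemma swapAt'_perm {l : List ℕ} {i : ℕ} (h : i + 2 ≤ l.length) : (swapAt' l i).Perm l := by
  obtain ⟨pre, a, b, post, rfl, rfl⟩ := List.exists_eq_append_cons_cons h
  simpa using .append_left pre (.swap a b post)

lemma swapAt'_swapAt' {l : List ℕ} {i : ℕ} (h : i + 2 ≤ l.length) :
    swapAt' (swapAt' l i) i = l := by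
  obtain ⟨pre, a, b, post, rfl, rfl⟩ := List.exists_eq_append_cons_cons h
  simp

lemma deleteAux_cons_append (keep : ℕ → Bool) (pre post : List ℕ) (a b : ℕ) (s : Bool)
    (rest : List (ℕ × Bool)) :
    deleteAux keep (pre ++ a :: b :: post) ((pre.length, s) :: rest) =
      (if keep a && keep b then [(pre.countP keep, s)] else []) ++
        deleteAux keep (pre ++ b :: a :: post) rest := by
  simp [deleteAux]

lemma WValid.tail {k : ℕ} {p : ℕ × Bool} {w : List (ℕ × Bool)} (h : WValid k (p :: w)) :
    WValid k w :=
  fun q hq => h q (List.mem_cons_of_mem p hq)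

/-- Every crossing between the strands `a` and `b` survives in exactly `(#s - 2).choose (k - 2)`
of the deletions to `k`-subsets `U ⊆ s`, namely those with `{a, b} ⊆ U`. -/
theorem sum_length_deleteAux {s : Finset ℕ} {k : ℕ} (hk : 2 ≤ k) (w : List (ℕ × Bool)) :
    ∀ {cur : List ℕ}, cur.Nodup → (∀ x ∈ cur, x ∈ s) → WValid cur.length w →
      ∑ U ∈ s.powersetCard k, (deleteAux (fun x => decide (x ∈ U)) cur w).length =
        (#s - 2).choose (k - 2) * w.length := by
  induction w with
  | nil => simp [deleteAux]
  | cons p rest ih =>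
    intro cur hnd hs hw
    obtain ⟨pre, a, b, post, rfl, hi⟩ := List.exists_eq_append_cons_cons (hw p (by simp))
    obtain ⟨i, t⟩ := p
    subst hi
    have hperm : (pre ++ b :: a :: post).Perm (pre ++ a :: b :: post) :=
      .append_left pre (.swap a b post)
    have hab : a ≠ b := by rintro rfl; simp [List.nodup_append] at hnd
    have hpair : #{U ∈ s.powersetCard k | a ∈ U ∧ b ∈ U} = (#s - 2).choose (k - 2) := by
      simpa [Finset.insert_subset_iff, hab] using
        card_filter_powersetCard_subset {a, b} s k (by simp [Finset.insert_subset_iff, hs])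
          (by simp [hab, hk])
    have hhead (U : Finset ℕ) :
        (if (decide (a ∈ U) && decide (b ∈ U)) = true
          then [(pre.countP (fun x => decide (x ∈ U)), t)] else []).length =
          if a ∈ U ∧ b ∈ U then 1 else 0 := by
      simp [apply_ite List.length]
    simp only [deleteAux_cons_append, List.length_append, Finset.sum_add_distrib, hhead,
      ← Finset.card_filter, hpair, List.length_cons]
    rw [ih (hperm.nodup_iff.2 hnd) (fun x hx => hs x (hperm.mem_iff.1 hx))
      (by simpa using hw.tail)]
    ring

theorem WValid.deleteAux (keep : ℕ → Bool) {w : List (ℕ × Bool)} :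
    ∀ {cur : List ℕ}, WValid cur.length w →
      WValid (cur.countP keep) (deleteAux keep cur w) := by
  induction w with
  | nil => simp [_root_.deleteAux, WValid]
  | cons p rest ih =>
    intro cur hw
    obtain ⟨pre, a, b, post, rfl, hi⟩ := List.exists_eq_append_cons_cons (hw p (by simp))
    obtain ⟨i, t⟩ := p
    subst hi
    have hperm : (pre ++ b :: a :: post).Perm (pre ++ a :: b :: post) :=
      .append_left pre (.swap a b post)
    rw [deleteAux_cons_append]
    rintro q hq
    rcases List.mem_append.1 hq with hq | hq
    · split_ifs at hq with hab
      · simp_all [List.countP_append]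
      · simp at hq
    · rw [← hperm.countP_eq]
      exact ih (by simpa using hw.tail) q hq

theorem deleteAux_deleteAux (keep keep' : ℕ → Bool) (f : ℕ → ℕ) {w : List (ℕ × Bool)} :
    ∀ {cur : List ℕ}, WValid cur.length w →
      deleteAux keep' ((cur.filter keep).map f) (deleteAux keep cur w) =
        deleteAux (fun x => keep x && keep' (f x)) cur w := by
  induction w with
  | nil => simp [deleteAux]
  | cons p rest ih =>
    intro cur hw
    obtain ⟨pre, a, b, post, rfl, hi⟩ := List.exists_eq_append_cons_cons (hw p (by simp))
    obtain ⟨i, t⟩ := p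
    subst hi
    have hrest := ih (cur := pre ++ b :: a :: post) (by simpa using hw.tail)
    rw [deleteAux_cons_append, deleteAux_cons_append]
    cases ha : keep a <;> cases hb : keep b
    case true.true =>
      have hcount : pre.countP keep = ((pre.filter keep).map f).length := by
        simp [List.countP_eq_length_filter]
      simp only [List.filter_append, List.filter_cons_of_pos ha, List.filter_cons_of_pos hb,
        List.map_append, List.map_cons, Bool.and_self, ↓reduceIte, List.singleton_append]
        at hrest ⊢
      rw [hcount, deleteAux_cons_append, hrest, List.countP_map, List.countP_filter]
      simp [Bool.and_comm]
    all_goals simp_all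

lemma countP_range_mem {n : ℕ} {S : Finset ℕ} (hS : S ⊆ range n) :
    (List.range n).countP (fun x => decide (x ∈ S)) = #S := by
  rw [List.countP_eq_length_filter, ← List.toFinset_card_of_nodup (List.nodup_range.filter _)]
  congr 1
  ext x
  simpa using fun hx => mem_range.1 (hS hx)

lemma map_rank_filter_range (keep : ℕ → Bool) (n : ℕ) :
    ((List.range n).filter keep).map (fun x => (List.range x).countP keep) =
      List.range ((List.range n).countP keep) := by
  induction n with
  | zero => rfl
  | succ n ih =>
    rw [List.range_succ, List.filter_append, List.countP_append, List.map_append, ih]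
    cases h : keep n <;> simp [h, List.range_succ]

theorem WValid.subDiag {n : ℕ} {D : List (ℕ × Bool)} (hD : WValid n D) {S : Finset ℕ}
    (hS : S ⊆ range n) : WValid #S (subDiag n S D) := by
  rw [← countP_range_mem hS]
  exact WValid.deleteAux _ (by simpa using hD)

theorem subDiag_subDiag {n : ℕ} {D : List (ℕ × Bool)} (hD : WValid n D) {S : Finset ℕ}
    (hS : S ⊆ range n) (U : Finset ℕ) :
    subDiag #S U (subDiag n S D) =
      subDiag n {x ∈ S | (List.range x).countP (fun y => decide (y ∈ S)) ∈ U} D := by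
  rw [subDiag, ← countP_range_mem hS, ← map_rank_filter_range, subDiag,
    deleteAux_deleteAux _ _ _ (by simpa using hD), subDiag]
  congr 1
  ext x
  simp

lemma card_filter_rank_mem {n : ℕ} {S U : Finset ℕ} (hS : S ⊆ range n) (hU : U ⊆ range #S) :
    #{x ∈ S | (List.range x).countP (fun y => decide (y ∈ S)) ∈ U} = #U := by
  rw [← countP_range_mem ((filter_subset _ S).trans hS), ← countP_range_mem hU,
    ← countP_range_mem hS, ← map_rank_filter_range, List.countP_map, List.countP_filter]
  congr 1
  ext x
  simp [Bool.and_comm]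

theorem RegWinding.subDiag {n k : ℕ} {D : List (ℕ × Bool)} (h : RegWinding n k D)
    (hD : WValid n D) {S : Finset ℕ} (hS : S ⊆ range n) : RegWinding #S k (subDiag n S D) := by
  intro U hU hUk
  rw [subDiag_subDiag hD hS]
  exact h _ ((filter_subset _ S).trans hS) (by rw [card_filter_rank_mem hS hU, hUk])

abbrev Arrangement (m : ℕ) := {l : List ℕ // l.Perm (List.range m)}

lemma Arrangement.length_eq {m : ℕ} (x : Arrangement m) : x.1.length = m := by
  simpa using x.2.length_eq

def Arrangement.swap {m i : ℕ} (h : i + 2 ≤ m) : Equiv.Perm (Arrangement m) :=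
  Function.Involutive.toPerm
    (fun x => ⟨swapAt' x.1 i, (swapAt'_perm (by rw [x.length_eq]; exact h)).trans x.2⟩)
    fun x => Subtype.ext (swapAt'_swapAt' (by rw [x.length_eq]; exact h))

@[simp] lemma Arrangement.swap_apply {m i : ℕ} (h : i + 2 ≤ m) (x : Arrangement m) :
    (Arrangement.swap h x).1 = swapAt' x.1 i :=
  rfl

@[simp] lemma Arrangement.swap_inv {m i : ℕ} (h : i + 2 ≤ m) :
    (Arrangement.swap h)⁻¹ = Arrangement.swap h :=
  rfl

/-- The image in `BGroup k` of a crossing at position `i` of a diagram whose strands are arranged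
as `l`, after the strands outside `keep` are deleted. -/
def crossingImage (keep : ℕ → Bool) (k i : ℕ) (l : List ℕ) : BGroup k :=
  if keep (l.getD i 0) && keep (l.getD (i + 1) 0) then .of ((l.take i).countP keep) else 1

@[simp] lemma crossingImage_append (keep : ℕ → Bool) (k : ℕ) (pre post : List ℕ)
    (a b : ℕ) :
    crossingImage keep k pre.length (pre ++ a :: b :: post) =
      if keep a && keep b then .of (pre.countP keep) else 1 := by
  simp [crossingImage]

@[simp] lemma crossingImage_append_append (keep : ℕ → Bool) (k : ℕ) (pre mid post : List ℕ)
    (a b c d : ℕ) :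
    crossingImage keep k (pre.length + (mid.length + 2))
        (pre ++ a :: b :: (mid ++ c :: d :: post)) =
      if keep c && keep d then .of ((pre ++ a :: b :: mid).countP keep) else 1 := by
  simpa [Nat.add_assoc] using crossingImage_append keep k (pre ++ a :: b :: mid) post c d

@[simp] lemma crossingImage_append_succ (keep : ℕ → Bool) (k : ℕ) (pre post : List ℕ)
    (a b c : ℕ) :
    crossingImage keep k (pre.length + 1) (pre ++ a :: b :: c :: post) =
      if keep b && keep c then .of (pre.countP keep + if keep a then 1 else 0) else 1 := by
  simpa using crossingImage_append keep k (pre ++ [a]) post b c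

lemma crossingImage_swapAt' (keep : ℕ → Bool) (k : ℕ) {l : List ℕ} {i : ℕ}
    (h : i + 2 ≤ l.length) : crossingImage keep k i (swapAt' l i) = crossingImage keep k i l := by
  obtain ⟨pre, a, b, post, rfl, rfl⟩ := List.exists_eq_append_cons_cons h
  simp [crossingImage, Bool.and_comm]

lemma evalN_deleteAux_cons (keep : ℕ → Bool) (k i : ℕ) (s : Bool) (l : List ℕ)
    (rest : List (ℕ × Bool)) :
    evalN k (deleteAux keep l ((i, s) :: rest)) =
      (if s then crossingImage keep k i l else (crossingImage keep k i l)⁻¹) *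
        evalN k (deleteAux keep (swapAt' l i) rest) := by
  rw [deleteAux, evalN_append, crossingImage]
  by_cases hc : (keep (l.getD i 0) && keep (l.getD (i + 1) 0)) = true <;>
    cases s <;> simp only [hc] <;> simp [evalN]

section WreathProduct

attribute [local instance] arrowAction arrowMulDistribMulAction

/-- The wreath product `BGroup k ≀ Perm (Arrangement m)`. -/
abbrev DeletionGroup (m k : ℕ) :=
  (Arrangement m → BGroup k) ⋊[MulDistribMulAction.toMulAut _ _] Equiv.Perm (Arrangement m)

end WreathProduct

namespace DeletionGroup

variable {m k : ℕ} {keep : ℕ → Bool}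

lemma mul_left_apply (a b : DeletionGroup m k) (x : Arrangement m) :
    (a * b).left x = a.left x * b.left (a.right⁻¹ x) :=
  rfl

lemma inv_left_apply (a : DeletionGroup m k) (x : Arrangement m) :
    a⁻¹.left x = (a.left (a.right x))⁻¹ :=
  rfl

def gen (keep : ℕ → Bool) (m k i : ℕ) : DeletionGroup m k :=
  if h : i + 2 ≤ m then ⟨fun x => crossingImage keep k i x.1, Arrangement.swap h⟩ else 1

lemma gen_of_le {i : ℕ} (h : i + 2 ≤ m) :
    gen keep m k i = ⟨fun x => crossingImage keep k i x.1, Arrangement.swap h⟩ :=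
  dif_pos h

lemma gen_braid (hkc : (List.range m).countP keep = k) {i : ℕ} (h : i + 3 ≤ m) :
    gen keep m k i * gen keep m k (i + 1) * gen keep m k i =
      gen keep m k (i + 1) * gen keep m k i * gen keep m k (i + 1) := by
  rw [gen_of_le (show i + 2 ≤ m by omega), gen_of_le (show i + 1 + 2 ≤ m by omega)]
  have hdecomp (x : Arrangement m) :
      ∃ pre a b c post, x.1 = pre ++ a :: b :: c :: post ∧ pre.length = i :=
    List.exists_eq_append_cons_cons_cons (by rw [x.length_eq]; exact h)
  refine SemidirectProduct.ext (funext fun x => ?_) (Equiv.ext fun x => Subtype.ext ?_)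
  · obtain ⟨pre, a, b, c, post, hx, rfl⟩ := hdecomp x
    have hcount := x.2.countP_eq keep
    rw [hkc, hx] at hcount
    simp only [mul_left_apply, SemidirectProduct.mul_right, mul_inv_rev, Equiv.Perm.mul_apply,
      Arrangement.swap_inv, Arrangement.swap_apply, hx, swapAt'_append, swapAt'_append_add,
      swapAt'_cons_succ, swapAt'_cons_cons, crossingImage_append, crossingImage_append_succ]
    cases ha : keep a <;> cases hb : keep b <;> cases hc : keep c <;> simp
    exact BGroup.of_braid (by simp [List.countP_append, ha, hb, hc] at hcount; omega)
  · obtain ⟨pre, a, b, c, post, hx, rfl⟩ := hdecomp x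
    simp [hx]

lemma gen_comm (hkc : (List.range m).countP keep = k) {i j : ℕ} (hij : i + 2 ≤ j)
    (hj : j + 2 ≤ m) : gen keep m k i * gen keep m k j = gen keep m k j * gen keep m k i := by
  rw [gen_of_le (show i + 2 ≤ m by omega), gen_of_le hj]
  have hdecomp (x : Arrangement m) : ∃ pre a b mid c d post,
      x.1 = pre ++ a :: b :: (mid ++ c :: d :: post) ∧ pre.length = i ∧
        j = pre.length + (mid.length + 2) := by
    obtain ⟨pre, a, b, rest, hx, hpre⟩ :=
      List.exists_eq_append_cons_cons (show i + 2 ≤ x.1.length by rw [x.length_eq]; omega)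
    have hrest : j - i - 2 + 2 ≤ rest.length := by
      have := x.length_eq; rw [hx] at this; simp at this; omega
    obtain ⟨mid, c, d, post, rfl, hmid⟩ := List.exists_eq_append_cons_cons hrest
    exact ⟨pre, a, b, mid, c, d, post, hx, hpre, by omega⟩
  refine SemidirectProduct.ext (funext fun x => ?_) (Equiv.ext fun x => Subtype.ext ?_)
  · obtain ⟨pre, a, b, mid, c, d, post, hx, rfl, rfl⟩ := hdecomp x
    have hcount := x.2.countP_eq keep
    rw [hkc, hx] at hcount
    simp only [mul_left_apply, Arrangement.swap_inv, Arrangement.swap_apply, hx, swapAt'_append,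
      swapAt'_append_add, swapAt'_cons_succ, crossingImage_append, crossingImage_append_append]
    cases ha : keep a <;> cases hb : keep b <;> cases hc : keep c <;> cases hd : keep d <;>
      simp [List.countP_append, ha, hb]
    exact BGroup.of_comm (by omega) (by simp [List.countP_append, ha, hb, hc, hd] at hcount; omega)
  · obtain ⟨pre, a, b, mid, c, d, post, hx, rfl, rfl⟩ := hdecomp x
    simp [hx]

lemma lift_gen_eq_one (hkc : (List.range m).countP keep = k) :
    ∀ r ∈ braidRelsN m, FreeGroup.lift (gen keep m k) r = 1 := by
  rintro r (⟨i, h, rfl⟩ | ⟨i, j, hij, hj, rfl⟩ | ⟨i, h, rfl⟩) <;>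
    simp only [map_mul, map_inv, FreeGroup.lift_apply_of, mul_inv_eq_one]
  · exact gen_braid hkc h
  · exact gen_comm hkc hij hj
  · exact dif_neg (by omega)

def deletionHom (hkc : (List.range m).countP keep = k) : BGroup m →* DeletionGroup m k :=
  PresentedGroup.toGroup (lift_gen_eq_one hkc)

lemma deletionHom_evalN_left (hkc : (List.range m).countP keep = k) {w : List (ℕ × Bool)}
    (hw : WValid m w) (x : Arrangement m) :
    (deletionHom hkc (evalN m w)).left x = evalN k (deleteAux keep x.1 w) := by
  induction w generalizing x with
  | nil => rfl
  | cons p rest ih =>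
    obtain ⟨i, s⟩ := p
    have hi : i + 2 ≤ m := hw _ (List.mem_cons_self ..)
    have hx : i + 2 ≤ x.1.length := by rw [x.length_eq]; exact hi
    rw [evalN_cons, map_mul, evalN_deleteAux_cons, mul_left_apply, ih hw.tail]
    have hof :
        deletionHom hkc (.of i) = ⟨fun x => crossingImage keep k i x.1, Arrangement.swap hi⟩ :=
      (PresentedGroup.toGroup.of _).trans (gen_of_le hi)
    cases s
    · simp only [Bool.false_eq_true, ↓reduceIte, map_inv, hof, inv_left_apply,
        SemidirectProduct.inv_right, inv_inv, Arrangement.swap_apply,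
        crossingImage_swapAt' keep k hx]
    · simp only [↓reduceIte, hof, Arrangement.swap_inv, Arrangement.swap_apply]

end DeletionGroup

theorem evalN_subDiag_congr {m : ℕ} {U : Finset ℕ} (hU : U ⊆ range m)
    {w w' : List (ℕ × Bool)} (hw : WValid m w) (hw' : WValid m w') (h : evalN m w = evalN m w') :
    evalN #U (subDiag m U w) = evalN #U (subDiag m U w') := by
  have hkc := countP_range_mem hU
  have := congrArg (fun g => (DeletionGroup.deletionHom hkc g).left ⟨List.range m, .refl _⟩) h
  simpa only [subDiag, DeletionGroup.deletionHom_evalN_left hkc hw,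
    DeletionGroup.deletionHom_evalN_left hkc hw'] using this

theorem sum_length_subDiag {m k : ℕ} (hk : 2 ≤ k) {w : List (ℕ × Bool)} (hw : WValid m w) :
    ∑ U ∈ (range m).powersetCard k, (subDiag m U w).length =
      (m - 2).choose (k - 2) * w.length := by
  simpa [subDiag] using sum_length_deleteAux (s := range m) hk w List.nodup_range (by simp)
    (by simpa using hw)

theorem minDiag_of_regWinding {m k : ℕ} {w : List (ℕ × Bool)} (h : RegWinding m k w)
    (hw : WValid m w) (hk : 2 ≤ k) (hkm : k ≤ m) : MinDiag m w := by
  refine ⟨hw, fun w' hw' heq => ?_⟩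
  have hsub : ∀ U ∈ (range m).powersetCard k,
      (subDiag m U w).length ≤ (subDiag m U w').length := by
    intro U hU
    obtain ⟨hUm, rfl⟩ := mem_powersetCard.1 hU
    exact (h U hUm rfl).2 _ (hw'.subDiag hUm) (evalN_subDiag_congr hUm hw' hw heq)
  have hsum := sum_le_sum hsub
  rw [sum_length_subDiag hk hw, sum_length_subDiag hk hw'] at hsum
  exact Nat.le_of_mul_le_mul_left hsum (Nat.choose_pos (by omega))

theorem regWinding_mono_general (n k m : ℕ) (D : List (ℕ × Bool)) (hD : WValid n D)
    (hk : 2 ≤ k) (hkm : k ≤ m) (h : RegWinding n k D) :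
    RegWinding n m D := by
  rintro S hS rfl
  exact minDiag_of_regWinding (h.subDiag hD hS) (hD.subDiag hS) hk hkm

/-- a `k`-regular winding diagram is `m`-regular winding for all `k ≤ m ≤ n`. -/
theorem regWinding_mono (n k m : ℕ) (D : List (ℕ × Bool)) (hD : WValid n D)
    (hk : 2 ≤ k) (hkm : k ≤ m) (hmn : m ≤ n) (h : RegWinding n k D) :
    RegWinding n m D :=
  regWinding_mono_general n k m D hD hk hkm h
end

section
/- If the third statement of Stallings' conjecture holds for B_n (geodesic words are closed under end extension ws ↦ wss), then the geodesic growth function satisfies γ_n(m+1) ≥ (n−1)·γ_n(m) for all m. -/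
/-- The defining relators of the braid group with `n` Artin generators
(braid relations and far commutativity). -/
def braidRels (n : ℕ) : Set (FreeGroup (Fin n)) :=
  {r | (∃ i j : Fin n, (i : ℕ) + 1 = (j : ℕ) ∧
          r = .of i * .of j * .of i * (.of j * .of i * .of j)⁻¹) ∨
       (∃ i j : Fin n, (i : ℕ) + 2 ≤ (j : ℕ) ∧
          r = .of i * .of j * (.of j * .of i)⁻¹)}

/-- The braid group `B n` on `n` strands, with Artin generators `σ₁, …, σ_{n-1}`. -/
abbrev BraidGroup (n : ℕ) := PresentedGroup (braidRels (n - 1))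

/-- A braid word: a list of letters, each a generator index together with a sign
(`true` = positive letter `σᵢ`, `false` = negative letter `σᵢ⁻¹`). -/
abbrev BraidWord (n : ℕ) := List (Fin (n - 1) × Bool)

/-- The braid represented by a braid word. -/
def evalWord {n : ℕ} (w : BraidWord n) : BraidGroup n :=
  (w.map fun p => if p.2 then (PresentedGroup.of p.1 : BraidGroup n)
    else (PresentedGroup.of p.1)⁻¹).prod

/-- The number of positive letters of a braid word. -/
def posCount {n : ℕ} (w : BraidWord n) : ℕ := (w.filter fun p => p.2).length

/-- The number of negative letters of a braid word. -/
def negCount {n : ℕ} (w : BraidWord n) : ℕ := (w.filter fun p => !p.2).length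

/-- The exponent sum `exp(w) = p(w) - n(w)` of a braid word. -/
def expSum {n : ℕ} (w : BraidWord n) : ℤ := (posCount w : ℤ) - (negCount w : ℤ)

/-- A braid word is geodesic if it has minimal length among all words
representing the same braid. -/
def Geodesic {n : ℕ} (w : BraidWord n) : Prop :=
  ∀ u : BraidWord n, evalWord u = evalWord w → w.length ≤ u.length

/-- The number of geodesic braid words of length `m` in `B_n`
(the spherical geodesic growth function). -/
noncomputable def geoCount (n m : ℕ) : ℕ :=
  Nat.card {w : BraidWord n // Geodesic w ∧ w.length = m}

lemma evalWord_append {n : ℕ} (u v : BraidWord n) :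
    evalWord (u ++ v) = evalWord u * evalWord v := by
  simp [evalWord]

lemma evalWord_snoc {n : ℕ} (z : BraidWord n) (j : Fin (n - 1)) (b : Bool) :
    evalWord (z ++ [(j, b)]) = evalWord z *
      (if b then (PresentedGroup.of j : BraidGroup n) else (PresentedGroup.of j)⁻¹) := by
  rw [evalWord_append]; simp [evalWord]

noncomputable def parityHom (n : ℕ) : BraidGroup n →* Multiplicative (ZMod 2) :=
  PresentedGroup.toGroup (f := fun _ => Multiplicative.ofAdd (1 : ZMod 2)) (by
    intro r hr
    rcases hr with ⟨i, j, -, rfl⟩ | ⟨i, j, -, rfl⟩ <;>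
      simp [FreeGroup.lift_apply_of] <;> group)

lemma parityHom_evalWord {n : ℕ} (w : BraidWord n) :
    parityHom n (evalWord w) = Multiplicative.ofAdd ((w.length : ZMod 2)) := by
  induction w with
  | nil => simp [evalWord]
  | cons p t ih =>
    have hc : evalWord (p :: t) = (if p.2 then (PresentedGroup.of p.1 : BraidGroup n)
        else (PresentedGroup.of p.1)⁻¹) * evalWord t := by
      simp [evalWord]
    rw [hc, map_mul, ih]
    have h1 : parityHom n (if p.2 then (PresentedGroup.of p.1 : BraidGroup n)
        else (PresentedGroup.of p.1)⁻¹) = Multiplicative.ofAdd (1 : ZMod 2) := by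
      rcases p.2 with _ | _ <;>
        · simp [parityHom, PresentedGroup.toGroup.of]
          try decide
    rw [h1, ← ofAdd_add]
    congr 1
    simp [List.length_cons]
    ring

lemma parity_of_eval_eq {n : ℕ} {u w : BraidWord n} (h : evalWord u = evalWord w) :
    u.length ≡ w.length [MOD 2] := by
  have hh := congrArg (parityHom n) h
  rw [parityHom_evalWord, parityHom_evalWord] at hh
  have h2 : ((u.length : ZMod 2)) = (w.length : ZMod 2) :=
    Multiplicative.ofAdd.injective hh
  exact (ZMod.natCast_eq_natCast_iff _ _ _).mp h2

lemma exists_geodesic_extension {n : ℕ} {w : BraidWord n} (hw : Geodesic w)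
    (hst : ∀ (w : BraidWord n) (s : Fin (n - 1) × Bool),
      Geodesic (w ++ [s]) → Geodesic (w ++ [s, s]))
    (i : Fin (n - 1)) : ∃ b : Bool, Geodesic (w ++ [(i, b)]) := by
  by_contra hcon
  push_neg at hcon
  have key : ∀ b : Bool, ∃ u : BraidWord n,
      evalWord u = evalWord (w ++ [(i, b)]) ∧ u.length + 1 = w.length := by
    intro b
    have hb := hcon b
    unfold Geodesic at hb
    push_neg at hb
    obtain ⟨u, hu, hlt⟩ := hb
    refine ⟨u, hu, ?_⟩
    have hpar := parity_of_eval_eq hu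
    have hup : evalWord (u ++ [(i, !b)]) = evalWord w := by
      rw [evalWord_snoc, hu, evalWord_snoc]
      cases b <;> simp [mul_assoc]
    have hge := hw _ hup
    rw [List.length_append, List.length_singleton] at hpar hlt hge
    have hpar2 : u.length % 2 = (w.length + 1) % 2 := hpar
    omega
  obtain ⟨u, hu, hul⟩ := key true
  obtain ⟨v, hv, hvl⟩ := key false
  rw [evalWord_snoc] at hu hv
  simp only [if_true, if_false, Bool.false_eq_true, ite_false, ite_true] at hu hv
  have heu : evalWord (u ++ [(i, false)]) = evalWord w := by
    rw [evalWord_snoc, hu]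
    simp [mul_assoc]
  have hgeo : Geodesic (u ++ [(i, false)]) := by
    intro z hz
    rw [heu] at hz
    have := hw z hz
    simp [List.length_append]
    omega
  have h2 := hst u (i, false) hgeo
  have heq : evalWord v = evalWord (u ++ [(i, false), (i, false)]) := by
    have hsplit : (u ++ [(i, false), (i, false)]) = (u ++ [(i, false)]) ++ [(i, false)] := by
      simp
    rw [hsplit, evalWord_snoc, heu, hv]
    simp
  have hfin := h2 v heq
  simp [List.length_append] at hfin
  omega

/-- if geodesic braid words are closed under end extension `ws ↦ wss`,
then `γ_n(m+1) ≥ (n-1) · γ_n(m)`. -/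
theorem geoCount_growth_of_stallings (n : ℕ) (hn : 2 ≤ n)
    (hst : ∀ (w : BraidWord n) (s : Fin (n - 1) × Bool),
      Geodesic (w ++ [s]) → Geodesic (w ++ [s, s])) :
    ∀ m : ℕ, (n - 1) * geoCount n m ≤ geoCount n (m + 1) := by
  intro m
  classical
  set S := {w : BraidWord n // Geodesic w ∧ w.length = m} with hS
  set T := {w : BraidWord n // Geodesic w ∧ w.length = m + 1} with hT
  have hfinL : Finite {l : List (Fin (n-1) × Bool) // l.length = m + 1} :=
    (List.finite_length_eq (Fin (n-1) × Bool) (m+1)).to_subtype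
  have hfin : Finite T := by
    apply Finite.of_injective
      (fun w : T => (⟨w.1, w.2.2⟩ : {l : List (Fin (n-1) × Bool) // l.length = m + 1}))
    intro a b hab
    simp only [Subtype.mk.injEq] at hab
    exact Subtype.ext hab
  have hinj : ∃ f : (Fin (n - 1) × S) → T, Function.Injective f := by
    have hch : ∀ p : Fin (n - 1) × S, ∃ b : Bool, Geodesic (p.2.1 ++ [(p.1, b)]) :=
      fun p => exists_geodesic_extension p.2.2.1 hst p.1
    choose b hb using hch
    refine ⟨fun p => ⟨p.2.1 ++ [(p.1, b p)], hb p, by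
      simp [List.length_append, p.2.2.2]⟩, ?_⟩
    intro p q hpq
    have h := congrArg Subtype.val hpq
    simp only at h
    have hlen : p.2.1.length = q.2.1.length := by rw [p.2.2.2, q.2.2.2]
    obtain ⟨h1, h2⟩ := List.append_inj h hlen
    simp only [List.cons.injEq, Prod.mk.injEq] at h2
    exact Prod.ext h2.1.1 (Subtype.ext h1)
  obtain ⟨f, hf⟩ := hinj
  have hcard := Nat.card_le_card_of_injective f hf
  rw [Nat.card_prod, Nat.card_eq_fintype_card, Fintype.card_fin] at hcard
  simpa [geoCount, hS, hT] using hcard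
end
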